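/- arXiv:1710.06106 — 2 statements merged into one kernel-verified Lean document; each statement's English description precedes it below -/
import Mathlib

section
/- Let X be a compact metric space, s an equivalence relation (setoid) on X whose natural map π : X → Quotient s is a closed map (i.e. the decomposition is upper semicontinuous) and whose quotient Quotient s is infinite, and G : X → X a continuous surjective map satisfying condition (*) that is topologically transitive and has a dense set of periodic points. Then the induced map H : Quotient s → Quotient s, H ⟦x⟧ = ⟦G x⟧, is a continuous surjection that is topologically transitive, has a dense set of periodic points, and, for every metric on Quotient s inducing the quotient topology, is sensitive to initial conditions; i.e. H is chaotic on the decomposition space. -/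
/-!
The quotient map semiconjugates `G` to `H`, so continuity passes to `H` through the quotient
topology, and surjectivity, transitivity and density of periodic points pass to the factor `H`.
Sensitivity then follows from Banks' theorem. A single finite orbit cannot be dense in an
infinite space, so there are two periodic points with disjoint orbits; these finite orbits are a
positive distance apart, hence every point `x` is uniformly far from one of them. Near `x` pick a
periodic point `p` of period `n` and, by transitivity, a point `z` whose orbit comes close to that
far orbit at a multiple of `n`; at that time `p` is back home, so `p` and `z` have drifted apart,
and `x` must be far from one of them.
-/

open Function Metric Set

section Dynamics

variable {X Y : Type*}

def IsTopologicallyTransitive [TopologicalSpace Y] (f : Y → Y) : Prop :=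
  ∀ U V : Set Y, IsOpen U → IsOpen V → U.Nonempty → V.Nonempty →
    ∃ n > 0, (f^[n] '' U ∩ V).Nonempty

def IsSensitive [PseudoMetricSpace Y] (f : Y → Y) : Prop :=
  ∃ η > 0, ∀ y : Y, ∀ ε > 0, ∃ z : Y, dist y z < ε ∧ ∃ n : ℕ, dist (f^[n] y) (f^[n] z) > η

namespace Function

theorem finite_range_iterate_of_mem_periodicPts {f : Y → Y} {x : Y} (hx : x ∈ periodicPts f) :
    (range fun i => f^[i] x).Finite := by
  obtain ⟨n, hn, hxn⟩ := hx
  refine ((finite_Iio n).image fun i => f^[i] x).subset ?_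
  rintro _ ⟨i, rfl⟩
  exact ⟨i % n, Nat.mod_lt _ hn, hxn.iterate_mod_apply i⟩

theorem range_iterate_subset_of_iterate_eq {f : Y → Y} {x y : Y} {i j : ℕ}
    (hy : y ∈ periodicPts f) (hxy : f^[i] x = f^[j] y) :
    (range fun k => f^[k] y) ⊆ range fun k => f^[k] x := by
  obtain ⟨n, hn, hyn⟩ := hy
  rintro _ ⟨k, rfl⟩
  have hj : j ≤ n * j := Nat.le_mul_of_pos_left j hn
  refine ⟨k + (n * j - j) + i, ?_⟩
  calc f^[k + (n * j - j) + i] x = f^[k] (f^[n * j - j] (f^[j] y)) := by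
        rw [iterate_add_apply, iterate_add_apply, hxy]
    _ = f^[k] (f^[n * j] y) := by rw [← iterate_add_apply (n := j), Nat.sub_add_cancel hj]
    _ = f^[k] y := by rw [(hyn.mul_const j).eq]

end Function

section Banks

variable {f : Y → Y}

theorem exists_mem_periodicPts_disjoint_range_iterate [TopologicalSpace Y] [T1Space Y]
    [Infinite Y] (hper : Dense (periodicPts f)) {x : Y} (hx : x ∈ periodicPts f) :
    ∃ y ∈ periodicPts f, Disjoint (range fun i => f^[i] x) (range fun i => f^[i] y) := by
  by_contra! hmeet
  have hsub : periodicPts f ⊆ range fun i => f^[i] x := by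
    intro y hy
    obtain ⟨_, ⟨i, rfl⟩, j, hij⟩ := not_disjoint_iff.mp (hmeet y hy)
    exact range_iterate_subset_of_iterate_eq hy hij.symm ⟨0, rfl⟩
  have hfin := finite_range_iterate_of_mem_periodicPts hx
  have huniv : (range fun i => f^[i] x) = univ := by
    rw [← (hper.mono hsub).closure_eq, hfin.isClosed.closure_eq]
  exact infinite_univ (huniv ▸ hfin)

theorem exists_pos_forall_mem_periodicPts_le_dist [MetricSpace Y] [Infinite Y]
    (hper : Dense (periodicPts f)) :
    ∃ δ > 0, ∀ x : Y, ∃ q ∈ periodicPts f, ∀ i, δ ≤ dist x (f^[i] q) := by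
  obtain ⟨p, hp⟩ := hper.nonempty
  obtain ⟨q, hq, hdisj⟩ := exists_mem_periodicPts_disjoint_range_iterate hper hp
  obtain ⟨δ, hδ, hsep⟩ := hdisj.exists_thickenings
    (finite_range_iterate_of_mem_periodicPts hp).isCompact
    (finite_range_iterate_of_mem_periodicPts hq).isClosed
  refine ⟨δ, hδ, fun x => ?_⟩
  have far_of_not_mem {y : Y} (hx : x ∉ thickening δ (range fun i => f^[i] y)) :
      ∀ i, δ ≤ dist x (f^[i] y) := fun i =>
    not_lt.mp fun h => hx (mem_thickening_iff.mpr ⟨_, ⟨i, rfl⟩, h⟩)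
  by_cases hxp : x ∈ thickening δ (range fun i => f^[i] p)
  · exact ⟨q, hq, far_of_not_mem (hsep.notMem_of_mem_left hxp)⟩
  · exact ⟨p, hp, far_of_not_mem hxp⟩

theorem IsTopologicallyTransitive.exists_dist_iterate_mul_lt [MetricSpace Y]
    (htrans : IsTopologicallyTransitive f) (hf : Continuous f) {U : Set Y} (hU : IsOpen U)
    (hUne : U.Nonempty) (q : Y) {r : ℝ} (hr : 0 < r) {n : ℕ} (hn : 0 < n) :
    ∃ z ∈ U, ∃ k i : ℕ, dist (f^[n * k] z) (f^[i] q) < r := by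
  let V := ⋂ i ∈ Finset.range (n + 1), f^[i] ⁻¹' ball (f^[i] q) r
  have hV : IsOpen V := isOpen_biInter_finset fun i _ => isOpen_ball.preimage (hf.iterate i)
  have hqV : q ∈ V := mem_iInter₂.mpr fun i _ => mem_ball_self hr
  obtain ⟨m, -, _, ⟨z, hzU, rfl⟩, hzV⟩ := htrans U V hU hV hUne ⟨q, hqV⟩
  -- the first multiple of `n` after `m` is at most `n` steps later
  have hmN : m ≤ n * (m / n + 1) := (Nat.lt_mul_div_succ m hn).le
  have hle : n * (m / n + 1) - m < n + 1 := by
    have := Nat.div_add_mod m n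
    rw [Nat.mul_succ]
    omega
  refine ⟨z, hzU, m / n + 1, n * (m / n + 1) - m, ?_⟩
  have := mem_iInter₂.mp hzV _ (Finset.mem_range.mpr hle)
  rwa [mem_preimage, ← iterate_add_apply, Nat.sub_add_cancel hmN, mem_ball] at this

theorem IsTopologicallyTransitive.isSensitive [MetricSpace Y] [Infinite Y]
    (htrans : IsTopologicallyTransitive f) (hf : Continuous f) (hper : Dense (periodicPts f)) :
    IsSensitive f := by
  obtain ⟨δ, hδ, hfar⟩ := exists_pos_forall_mem_periodicPts_le_dist hper
  refine ⟨δ / 4, by positivity, fun x ε hε => ?_⟩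
  have hε' : 0 < min ε (δ / 4) := lt_min hε (by positivity)
  have hball : (ball x (min ε (δ / 4))).Nonempty := ⟨x, mem_ball_self hε'⟩
  obtain ⟨p, ⟨n, hn, hp⟩, hpx⟩ := hper.exists_mem_open isOpen_ball hball
  obtain ⟨q, -, hq⟩ := hfar x
  obtain ⟨z, hzx, k, i, hzq⟩ :=
    htrans.exists_dist_iterate_mul_lt hf isOpen_ball hball q (by positivity : 0 < δ / 4) hn
  rw [mem_ball', lt_min_iff] at hpx hzx
  have hpz : δ / 2 < dist (f^[n * k] p) (f^[n * k] z) := by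
    rw [(hp.mul_const k).eq]
    linarith [hq i, dist_triangle4 x p (f^[n * k] z) (f^[i] q)]
  by_cases hxp : δ / 4 < dist (f^[n * k] x) (f^[n * k] p)
  · exact ⟨p, hpx.1, n * k, hxp⟩
  · refine ⟨z, hzx.1, n * k, ?_⟩
    linarith [dist_triangle_left (f^[n * k] p) (f^[n * k] z) (f^[n * k] x)]

end Banks

namespace Function.Semiconj

variable [TopologicalSpace X] [TopologicalSpace Y] {π : X → Y} {G : X → X} {H : Y → Y}

theorem isTopologicallyTransitive (h : Semiconj π G H) (hc : Continuous π)
    (hs : Surjective π) (hG : IsTopologicallyTransitive G) : IsTopologicallyTransitive H := by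
  intro U V hU hV hUne hVne
  obtain ⟨n, hn, _, ⟨z, hzU, rfl⟩, hzV⟩ :=
    hG _ _ (hU.preimage hc) (hV.preimage hc) (hUne.preimage hs) (hVne.preimage hs)
  exact ⟨n, hn, π (G^[n] z), ⟨π z, hzU, (h.iterate_right n z).symm⟩, hzV⟩

theorem dense_periodicPts (h : Semiconj π G H) (hc : Continuous π) (hs : Surjective π)
    (hG : Dense (periodicPts G)) : Dense (periodicPts H) :=
  (hs.denseRange.dense_image hc hG).mono h.mapsTo_periodicPts.image_subset

end Function.Semiconj

end Dynamics

theorem stmt7_general {X : Type*} [MetricSpace X] (s : Setoid X)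
    (hinf : Infinite (Quotient s))
    (G : X → X)
    (hGcont : Continuous G) (hGsurj : Function.Surjective G)
    (hGtrans : ∀ U V : Set X, IsOpen U → IsOpen V → U.Nonempty → V.Nonempty →
      ∃ n > 0, (G^[n] '' U ∩ V).Nonempty)
    (hGper : Dense {x : X | ∃ n > 0, G^[n] x = x})
    (H : Quotient s → Quotient s)
    (hH : ∀ x : X, H (Quotient.mk s x) = Quotient.mk s (G x)) :
    Continuous H ∧ Function.Surjective H ∧
    (∀ U V : Set (Quotient s), IsOpen U → IsOpen V → U.Nonempty → V.Nonempty →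
      ∃ n > 0, (H^[n] '' U ∩ V).Nonempty) ∧
    Dense {q : Quotient s | ∃ n > 0, H^[n] q = q} ∧
    (∀ m : MetricSpace (Quotient s),
      m.toUniformSpace.toTopologicalSpace
        = (instTopologicalSpaceQuotient : TopologicalSpace (Quotient s)) →
      ∃ η > 0, ∀ q : Quotient s, ∀ ε > 0, ∃ z : Quotient s,
        m.toDist.dist q z < ε ∧ ∃ n : ℕ, m.toDist.dist (H^[n] q) (H^[n] z) > η) := by
  have hsemi : Semiconj (Quotient.mk s) G H := fun x => (hH x).symm
  have hHcont : Continuous H := isQuotientMap_quot_mk.continuous_iff.mpr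
    (hsemi.comp_eq ▸ continuous_quot_mk.comp hGcont)
  have hHsurj : Surjective H :=
    Surjective.of_comp (hsemi.comp_eq ▸ Quotient.mk_surjective.comp hGsurj)
  have hHtrans := hsemi.isTopologicallyTransitive continuous_quot_mk Quotient.mk_surjective hGtrans
  have hHper := hsemi.dense_periodicPts continuous_quot_mk Quotient.mk_surjective hGper
  refine ⟨hHcont, hHsurj, hHtrans, hHper, fun m hm => ?_⟩
  exact @IsTopologicallyTransitive.isSensitive _ _ m hinf (hm ▸ hHtrans) (hm ▸ hHcont) (hm ▸ hHper)

/-- Let `X` be a compact metric space, `s` a setoid whose natural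
map is closed (usc decomposition) and whose quotient is infinite, and
`G : X → X` a continuous surjection satisfying condition (*) which is
topologically transitive and has a dense set of periodic points. Then the
induced map `H` on the decomposition space is a continuous surjection which is
topologically transitive, has a dense set of periodic points, and is sensitive
to initial conditions for any metric inducing the quotient topology; i.e. `H`
is chaotic on the decomposition space. -/
theorem stmt7 {X : Type*} [MetricSpace X] [CompactSpace X] (s : Setoid X)
    (hπ : IsClosedMap (Quotient.mk s : X → Quotient s))
    (hinf : Infinite (Quotient s))
    (G : X → X)
    (hGcont : Continuous G) (hGsurj : Function.Surjective G)
    (hstar : ∀ x : X, G '' {y | s.r y x} = {z | s.r z (G x)})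
    (hGtrans : ∀ U V : Set X, IsOpen U → IsOpen V → U.Nonempty → V.Nonempty →
      ∃ n > 0, (G^[n] '' U ∩ V).Nonempty)
    (hGper : Dense {x : X | ∃ n > 0, G^[n] x = x})
    (H : Quotient s → Quotient s)
    (hH : ∀ x : X, H (Quotient.mk s x) = Quotient.mk s (G x)) :
    Continuous H ∧ Function.Surjective H ∧
    (∀ U V : Set (Quotient s), IsOpen U → IsOpen V → U.Nonempty → V.Nonempty →
      ∃ n > 0, (H^[n] '' U ∩ V).Nonempty) ∧
    Dense {q : Quotient s | ∃ n > 0, H^[n] q = q} ∧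
    (∀ m : MetricSpace (Quotient s),
      m.toUniformSpace.toTopologicalSpace
        = (instTopologicalSpaceQuotient : TopologicalSpace (Quotient s)) →
      ∃ η > 0, ∀ q : Quotient s, ∀ ε > 0, ∃ z : Quotient s,
        m.toDist.dist q z < ε ∧ ∃ n : ℕ, m.toDist.dist (H^[n] q) (H^[n] z) > η) :=
  stmt7_general s hinf G hGcont hGsurj hGtrans hGper H hH
end

section
/- The map R : Σ → Σ defined by (R ψ)(i) = (C^[i] ψ)(0) (the first coordinate of the i-th iterate of C at ψ, with C^[0] the identity) is a homeomorphism of Σ satisfying S ∘ R = R ∘ C; hence the shift S and the map C are topologically conjugate. -/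
/-- The map `C` on the symbolic space `Σ = ℕ → Bool`. -/
def Cmap : (ℕ → Bool) → (ℕ → Bool) := fun ψ i => xor (ψ 0) (ψ (i + 1))

/-- The shift map `S` on the symbolic space. -/
def Smap : (ℕ → Bool) → (ℕ → Bool) := fun ψ i => ψ (i + 1)

/-- The map `R` whose `i`-th coordinate is the first coordinate of the `i`-th
iterate of `C`. -/
def Rmap : (ℕ → Bool) → (ℕ → Bool) := fun ψ i => (Cmap^[i] ψ) 0

/-!
The bit `ψ 0` that `C` adds to every coordinate cancels at the next step, so
`(C^[n+1] ψ) j = ψ n ⊕ ψ (n + j + 1)`. Hence `R` is the discrete derivative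
`(R ψ) (i + 1) = ψ i ⊕ ψ (i + 1)`, inverted by the prefix xor, and a continuous bijection of the
compact Hausdorff space `Σ` is a homeomorphism. The conjugacy is `C^[i+1] = C^[i] ∘ C`.
-/

theorem Bool.xor_xor_cancel_left (a b : Bool) : xor a (xor a b) = b :=
  Bool.bne_self_left a b

theorem Cmap_iterate_succ_apply (n : ℕ) (ψ : ℕ → Bool) (j : ℕ) :
    Cmap^[n + 1] ψ j = xor (ψ n) (ψ (n + j + 1)) := by
  induction n generalizing j with
  | zero => simp only [Nat.zero_add]; rfl
  | succ n ih =>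
    rw [Function.iterate_succ_apply']
    show xor (Cmap^[n + 1] ψ 0) (Cmap^[n + 1] ψ (j + 1)) = _
    rw [ih, ih, Bool.xor_assoc, Bool.xor_left_comm (ψ (n + 0 + 1)), Bool.xor_xor_cancel_left,
      Nat.add_zero, Nat.add_right_comm n 1 j, Nat.add_assoc n j 1]

theorem Rmap_succ (ψ : ℕ → Bool) (i : ℕ) : Rmap ψ (i + 1) = xor (ψ i) (ψ (i + 1)) :=
  Cmap_iterate_succ_apply i ψ 0

def prefixXor (φ : ℕ → Bool) : ℕ → Bool
  | 0 => φ 0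
  | i + 1 => xor (prefixXor φ i) (φ (i + 1))

theorem prefixXor_Rmap (ψ : ℕ → Bool) : prefixXor (Rmap ψ) = ψ := by
  funext i
  induction i with
  | zero => rfl
  | succ i ih => rw [prefixXor, ih, Rmap_succ, Bool.xor_xor_cancel_left]

theorem Rmap_prefixXor (φ : ℕ → Bool) : Rmap (prefixXor φ) = φ := by
  funext i
  cases i with
  | zero => rfl
  | succ i => rw [Rmap_succ, prefixXor, Bool.xor_xor_cancel_left]

theorem continuous_Rmap : Continuous Rmap := by
  refine continuous_pi fun i => ?_
  cases i with
  | zero => exact continuous_apply 0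
  | succ i =>
    simp only [Rmap_succ]
    exact (continuous_of_discreteTopology (f := fun p : Bool × Bool => xor p.1 p.2)).comp
      (by fun_prop : Continuous fun ψ : ℕ → Bool => (ψ i, ψ (i + 1)))

theorem isHomeomorph_Rmap : IsHomeomorph Rmap :=
  isHomeomorph_iff_continuous_bijective.mpr
    ⟨continuous_Rmap, Function.LeftInverse.injective prefixXor_Rmap,
      Function.RightInverse.surjective Rmap_prefixXor⟩

theorem Smap_comp_Rmap : Smap ∘ Rmap = Rmap ∘ Cmap := by
  funext ψ i
  exact congrFun (Function.iterate_succ_apply Cmap i ψ) 0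

/-- `R` is a homeomorphism of the symbolic space (product
topology, `Bool` discrete) satisfying `S ∘ R = R ∘ C`; hence the shift `S` and
the map `C` are topologically conjugate. -/
theorem stmt11 : IsHomeomorph Rmap ∧ Smap ∘ Rmap = Rmap ∘ Cmap :=
  ⟨isHomeomorph_Rmap, Smap_comp_Rmap⟩
end
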